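/- (Regular expansion) Let x be an eigenvector of L(G) for an eigenvalue λ, and let i be a vertex with x_i ≠ 0 that is adjacent to exactly p vertices j, all of which satisfy x_j = 0 (soft nodes). Then λ = p. Moreover, let G' be the graph obtained from G by deleting i and replacing it by a d-regular graph H on k new vertices, each of these k vertices being adjacent to all p former neighbors of i (and H's own edges among the new vertices). Then the vector x' that agrees with x on V(G) \ {i} and takes the value x_i / k on each of the k new vertices is an eigenvector of L(G') for the eigenvalue p. -/
import Mathlib


open Matrix

/-- The Laplacian matrix of a finite simple graph: degree on the diagonal,
`-1` at entries corresponding to edges, `0` elsewhere. -/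
def lap {V : Type*} [Fintype V] [DecidableEq V] (G : SimpleGraph V) [DecidableRel G.Adj] :
    Matrix V V ℝ :=
  Matrix.of fun v w => if v = w then (G.degree v : ℝ) else if G.Adj v w then -1 else 0

lemma degree_cast_sum {V : Type*} [Fintype V] [DecidableEq V] (G : SimpleGraph V)
    [DecidableRel G.Adj] (v : V) :
    (G.degree v : ℝ) = ∑ w, if G.Adj v w then (1:ℝ) else 0 := by
  have : G.degree v = (Finset.univ.filter (G.Adj v)).card := by
    rw [← SimpleGraph.neighborFinset_eq_filter]; rfl
  rw [this, Finset.card_filter]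
  push_cast
  rfl

lemma lap_mulVec {V : Type*} [Fintype V] [DecidableEq V] (G : SimpleGraph V)
    [DecidableRel G.Adj] (x : V → ℝ) (v : V) :
    (lap G *ᵥ x) v = ∑ w, if G.Adj v w then x v - x w else 0 := by
  have hdeg := degree_cast_sum G v
  simp only [mulVec, dotProduct, lap, of_apply]
  have h1 : ∀ w : V, (if v = w then (G.degree v : ℝ) else if G.Adj v w then -1 else 0) * x w
      = (if v = w then (G.degree v : ℝ) * x v else 0) + (if G.Adj v w then -x w else 0) := by
    intro w
    by_cases h : v = w
    · subst h; simp [G.irrefl]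
    · simp only [h, if_false]
      by_cases h2 : G.Adj v w <;> simp [h2]
  have h2 : ∀ w : V, (if G.Adj v w then x v - x w else 0)
      = (if G.Adj v w then (1:ℝ) else 0) * x v + (if G.Adj v w then -x w else 0) := by
    intro w; by_cases h : G.Adj v w <;> simp [h]; ring
  simp only [h1, h2, Finset.sum_add_distrib, Finset.sum_ite_eq, Finset.mem_univ, if_true,
    ← Finset.sum_mul, ← hdeg]

lemma sum_split_at {V : Type*} [Fintype V] [DecidableEq V] (i : V) (f : V → ℝ) :
    ∑ v : V, f v = (∑ b : {v : V // v ≠ i}, f b.1) + f i := by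
  rw [← Finset.sum_erase_add Finset.univ f (Finset.mem_univ i)]
  congr 1
  exact (Finset.sum_subtype _ (by simp) f)

/-- (Regular expansion) If a vertex `i` with `x i ≠ 0` is adjacent to exactly `p` vertices,
all soft (value `0`), then `λ = p`; and replacing `i` by a `d`-regular graph `H` on `k`
new vertices, each joined to all former neighbors of `i`, yields a graph with eigenvector
taking the value `x i / k` on the new vertices, for the eigenvalue `p`. -/
theorem regular_expansion {V : Type*} [Fintype V] [DecidableEq V]
    (G : SimpleGraph V) [DecidableRel G.Adj] (lam : ℝ) (x : V → ℝ) (hx : x ≠ 0)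
    (heig : lap G *ᵥ x = lam • x) (i : V) (hxi : x i ≠ 0) (p : ℕ)
    (hdeg : G.degree i = p) (hsoft : ∀ v, G.Adj i v → x v = 0)
    (k d : ℕ) (hk : 0 < k) (H : SimpleGraph (Fin k)) [DecidableRel H.Adj]
    (hH : H.IsRegularOfDegree d)
    (G' : SimpleGraph ({v : V // v ≠ i} ⊕ Fin k)) [DecidableRel G'.Adj]
    (hll : ∀ a b : {v : V // v ≠ i}, G'.Adj (Sum.inl a) (Sum.inl b) ↔ G.Adj a.1 b.1)
    (hlr : ∀ (a : {v : V // v ≠ i}) (s : Fin k), G'.Adj (Sum.inl a) (Sum.inr s) ↔ G.Adj i a.1)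
    (hrr : ∀ s t : Fin k, G'.Adj (Sum.inr s) (Sum.inr t) ↔ H.Adj s t) :
    lam = (p : ℝ) ∧
      Sum.elim (fun v : {v : V // v ≠ i} => x v.1) (fun _ : Fin k => x i / k) ≠ 0 ∧
      lap G' *ᵥ Sum.elim (fun v : {v : V // v ≠ i} => x v.1) (fun _ : Fin k => x i / k) =
        (p : ℝ) • Sum.elim (fun v : {v : V // v ≠ i} => x v.1) (fun _ : Fin k => x i / k) := by
  have hk' : (k : ℝ) ≠ 0 := Nat.cast_ne_zero.mpr hk.ne'
  -- eigenvalue equals p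
  have hlam : lam = (p : ℝ) := by
    have h := congrFun heig i
    rw [lap_mulVec] at h
    simp only [Pi.smul_apply, smul_eq_mul] at h
    have hsum : ∑ w, (if G.Adj i w then x i - x w else 0)
        = ∑ w, (if G.Adj i w then (1:ℝ) else 0) * x i := by
      refine Finset.sum_congr rfl fun w _ => ?_
      by_cases hw : G.Adj i w
      · simp [hw, hsoft w hw]
      · simp [hw]
    rw [hsum, ← Finset.sum_mul, ← degree_cast_sum, hdeg] at h
    exact (mul_right_cancel₀ hxi h).symm
  refine ⟨hlam, ?_, ?_⟩
  · intro h0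
    have := congrFun h0 (Sum.inr ⟨0, hk⟩)
    simp only [Sum.elim_inr, Pi.zero_apply] at this
    rcases div_eq_zero_iff.mp this with h | h
    · exact hxi h
    · exact hk' h
  · funext u
    rw [lap_mulVec, Fintype.sum_sum_type]
    cases u with
    | inl a =>
      simp only [Sum.elim_inl, Sum.elim_inr, hll, hlr, Pi.smul_apply, smul_eq_mul]
      have hG : ∑ v : V, (if G.Adj a.1 v then x a.1 - x v else 0) = (p : ℝ) * x a.1 := by
        have h := congrFun heig a.1
        rw [lap_mulVec] at h
        simpa [hlam] using h
      rw [sum_split_at i (fun v => if G.Adj a.1 v then x a.1 - x v else 0)] at hG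
      rw [Finset.sum_const, Finset.card_univ, Fintype.card_fin, nsmul_eq_mul]
      have hcomm : G.Adj a.1 i ↔ G.Adj i a.1 := G.adj_comm a.1 i
      by_cases hai : G.Adj i a.1
      · have hxa : x a.1 = 0 := hsoft _ hai
        simp only [hcomm.mpr hai, if_pos, hai, hxa] at hG ⊢
        have : (∑ b : {v : V // v ≠ i}, if G.Adj a.1 b.1 then (0:ℝ) - x b.1 else 0)
            = -(0 - x i) := by linarith [hG]
        rw [this]
        field_simp
        ring
      · simp only [hcomm, hai, if_false, add_zero, mul_zero, add_zero] at hG ⊢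
        linarith [hG]
    | inr s =>
      simp only [Sum.elim_inl, Sum.elim_inr, Pi.smul_apply, smul_eq_mul]
      have h2 : ∑ t : Fin k, (if G'.Adj (Sum.inr s) (Sum.inr t) then x i / k - x i / k else 0)
          = 0 := by simp
      rw [h2, add_zero]
      have hcond : ∀ b : {v : V // v ≠ i},
          (if G'.Adj (Sum.inr s) (Sum.inl b) then x i / k - x b.1 else 0)
          = (if G.Adj i b.1 then (1:ℝ) else 0) * (x i / k) := by
        intro b
        have hiff : G'.Adj (Sum.inr s) (Sum.inl b) ↔ G.Adj i b.1 :=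
          (G'.adj_comm _ _).trans (hlr b s)
        by_cases hb : G.Adj i b.1
        · simp [hiff, hb, hsoft _ hb]
        · simp [hiff, hb]
      simp only [hcond]
      rw [← Finset.sum_mul]
      have : (∑ b : {v : V // v ≠ i}, if G.Adj i b.1 then (1:ℝ) else 0) = (p : ℝ) := by
        have := sum_split_at i (fun v => if G.Adj i v then (1:ℝ) else 0)
        rw [← degree_cast_sum, hdeg] at this
        simp only [G.irrefl, if_false, add_zero] at this
        exact this.symm
      rw [this]
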